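/- In the polynomial ring P = A[T, X_1, …, X_n] over a commutative ring A, with d_1,…,d_n ∈ ℕ, there is a canonical A-algebra isomorphism P[x_1,…,x_n]/(X_1 − T^{d_1}x_1, …, X_n − T^{d_n}x_n) ≅ P[(X_1)/T^{d_1}, …, (X_n)/T^{d_n}]. -/

import Mathlib

open scoped TensorProduct

noncomputable section

variable {A : Type*} [CommRing A] {I : Type*}

/-- The multiplicative submonoid generated by the elements `a_i` of the multi-center. -/
def dilSubmonoid (a : I → A) : Submonoid A := Submonoid.closure (Set.range a)

lemma a_mem_dilSubmonoid (a : I → A) (i : I) : a i ∈ dilSubmonoid a :=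
  Submonoid.subset_closure ⟨i, rfl⟩

/-- `a^ν` for `ν ∈ ⊕_{i∈I} ℕ`. -/
def apow (a : I → A) (ν : I →₀ ℕ) : A := ν.prod fun i n => a i ^ n

lemma apow_mem (a : I → A) (ν : I →₀ ℕ) : apow a ν ∈ dilSubmonoid a :=
  Submonoid.prod_mem _ fun i _ => pow_mem (a_mem_dilSubmonoid a i) _

/-- The product ideal `L^ν = ∏_i (M_i + (a_i))^{ν_i}`. -/
def Lpow (M : I → Ideal A) (a : I → A) (ν : I →₀ ℕ) : Ideal A :=
  ν.prod fun i n => (M i + Ideal.span {a i}) ^ n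

/-- The fraction `m / a_i` in the localization at the submonoid generated by the `a_i`. -/
def dilFrac (a : I → A) (i : I) (m : A) : Localization (dilSubmonoid a) :=
  Localization.mk m ⟨a i, a_mem_dilSubmonoid a i⟩

/-- The multi-centered dilatation `A[{M_i/a_i}]`, realized as the sub-`A`-algebra of the
localization `S⁻¹A` generated by the fractions `m / a_i` with `m ∈ M_i`. -/
def dilatation (M : I → Ideal A) (a : I → A) :
    Subalgebra A (Localization (dilSubmonoid a)) :=
  Algebra.adjoin A (⋃ i, dilFrac a i '' (M i))
set_option synthInstance.maxHeartbeats 1000000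
set_option maxHeartbeats 1000000


/-- The ideal of relations `(X_1 − T^{d_1}x_1, …, X_n − T^{d_n}x_n)` in
`P[x_1,…,x_n]`, where `P = A[T, X_1, …, X_n]` with `T = X none`, `X_i = X (some i)`. -/
def relIdealP (n : ℕ) (d : Fin n → ℕ) :
    Ideal (MvPolynomial (Fin n) (MvPolynomial (Option (Fin n)) A)) :=
  Ideal.span (Set.range fun i =>
    MvPolynomial.C (MvPolynomial.X (Option.some i))
      - MvPolynomial.C (MvPolynomial.X Option.none ^ d i) * MvPolynomial.X i)

/-!
Send `x_i ↦ X_i/T^{d_i}`; since each `M_i = (X_i)` is principal, the image is the dilatation.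
Substituting `X_i = T^{d_i} x_i` shows that modulo the relations every element is congruent to one
of `A[T, x]`, so the kernel is the relation ideal once `A[T, x] → S⁻¹P`, `x_i ↦ X_i/T^{d_i}`, is
injective. For that, write `T^N f = g(T, T^{d_i} x_i)`: the image of `f` is `g / T^N` with
`g ∈ P ⊆ S⁻¹P` (`T` is a non-zero-divisor), so it vanishes only if `g`, hence `T^N f`, hence `f`
does.
-/

open MvPolynomial

lemma RingHom.ker_eq_of_leftInverse_mod {R S : Type*} [CommRing R] [Semiring S] (g : R →+* S)
    (h : S →+* R) (J : Ideal R) (hJ : J ≤ RingHom.ker g)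
    (hinv : (Ideal.Quotient.mk J).comp (h.comp g) = Ideal.Quotient.mk J) :
    RingHom.ker g = J := by
  refine le_antisymm (fun f hf => ?_) hJ
  rw [← Ideal.Quotient.eq_zero_iff_mem, ← RingHom.congr_fun hinv f]
  simp [RingHom.mem_ker.mp hf]

section Dilatation

variable (a : I → A)

lemma dilSubmonoid_le_nonZeroDivisors (ha : ∀ i, a i ∈ nonZeroDivisors A) :
    dilSubmonoid a ≤ nonZeroDivisors A := by
  rw [dilSubmonoid, Submonoid.closure_le]
  rintro _ ⟨i, rfl⟩
  exact ha i

lemma algebraMap_mul_dilFrac (i : I) (m : A) :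
    algebraMap A _ (a i) * dilFrac a i m = algebraMap A _ m := by
  rw [← Localization.mk_one_eq_algebraMap, ← Localization.mk_one_eq_algebraMap, dilFrac,
    Localization.mk_mul, Localization.mk_eq_mk_iff, Localization.r_iff_exists]
  exact ⟨1, by push_cast; ring⟩

lemma dilFrac_mul (i : I) (p m : A) :
    dilFrac a i (p * m) = algebraMap A _ p * dilFrac a i m := by
  rw [dilFrac, dilFrac, ← Localization.mk_one_eq_algebraMap, Localization.mk_mul, one_mul]

lemma dilatation_span_singleton (m : I → A) :
    dilatation (fun i => Ideal.span {m i}) a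
      = Algebra.adjoin A (Set.range fun i => dilFrac a i (m i)) := by
  refine le_antisymm (Algebra.adjoin_le fun x hx => ?_)
    (Algebra.adjoin_mono fun _ ⟨i, hi⟩ => Set.mem_iUnion.mpr
      ⟨i, m i, Ideal.mem_span_singleton_self _, hi⟩)
  obtain ⟨i, c, hc, rfl⟩ := by simpa only [Set.mem_iUnion, Set.mem_image] using hx
  obtain ⟨p, rfl⟩ := Ideal.mem_span_singleton'.mp hc
  rw [dilFrac_mul]
  exact mul_mem (Subalgebra.algebraMap_mem _ p) (Algebra.subset_adjoin ⟨i, rfl⟩)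

end Dilatation

section Polynomial

variable (A) {σ : Type*} (d : σ → ℕ)

abbrev tPow : σ → MvPolynomial (Option σ) A := fun i => X none ^ d i

def mulTPow : MvPolynomial (Option σ) A →ₐ[A] MvPolynomial (Option σ) A :=
  aeval fun o => o.elim (X none) fun i => X none ^ d i * X (some i)

@[simp] lemma mulTPow_X_none : mulTPow A d (X none) = X none := by simp [mulTPow]

@[simp] lemma mulTPow_X_some (i : σ) : mulTPow A d (X (some i)) = X none ^ d i * X (some i) := by
  simp [mulTPow]

def divTPow : MvPolynomial (Option σ) A →ₐ[A] Localization (dilSubmonoid (tPow A d)) :=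
  aeval fun o => o.elim (algebraMap (MvPolynomial (Option σ) A) _ (X none))
    fun i => dilFrac (tPow A d) i (X (some i))

/-- The target `P` stands for `A[T, x]`: its variable `X (some i)` plays the role of `x_i`. -/
def eliminateX : MvPolynomial σ (MvPolynomial (Option σ) A) →+* MvPolynomial (Option σ) A :=
  eval₂Hom (mulTPow A d).toRingHom fun i => X (some i)

def varsOfX : MvPolynomial (Option σ) A →ₐ[A] MvPolynomial σ (MvPolynomial (Option σ) A) :=
  aeval fun o => o.elim (C (X none)) X

def dilMap : MvPolynomial σ (MvPolynomial (Option σ) A)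
    →ₐ[MvPolynomial (Option σ) A] Localization (dilSubmonoid (tPow A d)) :=
  aeval fun i => dilFrac (tPow A d) i (X (some i))

lemma divTPow_comp_mulTPow :
    (divTPow A d).comp (mulTPow A d) = IsScalarTower.toAlgHom A _ _ := by
  refine algHom_ext fun o => ?_
  cases o with
  | none => simp [divTPow, mulTPow]
  | some i => simpa [divTPow, mulTPow] using algebraMap_mul_dilFrac (tPow A d) i (X (some i))

lemma exists_mulTPow_eq_X_none_pow_mul (f : MvPolynomial (Option σ) A) :
    ∃ (N : ℕ) (g : MvPolynomial (Option σ) A), mulTPow A d g = X none ^ N * f := by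
  induction f using MvPolynomial.induction_on with
  | C c => exact ⟨0, C c, by simp⟩
  | add p q hp hq =>
    obtain ⟨M, g, hg⟩ := hp
    obtain ⟨N, h, hh⟩ := hq
    refine ⟨M + N, X none ^ N * g + X none ^ M * h, ?_⟩
    rw [map_add, map_mul, map_mul, map_pow, map_pow, mulTPow_X_none, hg, hh]
    ring
  | mul_X p o hp =>
    obtain ⟨N, g, hg⟩ := hp
    cases o with
    | none => exact ⟨N, g * X none, by rw [map_mul, hg, mulTPow_X_none, mul_assoc]⟩
    | some i =>
      refine ⟨N + d i, g * X (some i), ?_⟩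
      rw [map_mul, hg, mulTPow_X_some]
      ring

lemma divTPow_injective : Function.Injective (divTPow A d) := by
  refine (injective_iff_map_eq_zero _).mpr fun f hf => ?_
  obtain ⟨N, g, hg⟩ := exists_mulTPow_eq_X_none_pow_mul A d f
  have hT : ∀ k, (X none ^ k : MvPolynomial (Option σ) A) ∈ nonZeroDivisors _ :=
    fun k => isRegular_X_pow k |>.mem_nonZeroDivisors
  have hg0 : g = 0 := by
    refine IsLocalization.injective (Localization (dilSubmonoid (tPow A d)))
      (dilSubmonoid_le_nonZeroDivisors _ fun i => hT (d i)) ?_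
    have := congrArg (divTPow A d) hg
    rw [← AlgHom.comp_apply, divTPow_comp_mulTPow, map_mul, hf, mul_zero] at this
    simpa using this
  rw [hg0, map_zero] at hg
  exact (mem_nonZeroDivisors_iff_right.mp (hT N)) f (by rw [mul_comm, hg])

lemma divTPow_comp_eliminateX :
    (divTPow A d).toRingHom.comp (eliminateX A d) = (dilMap A d).toRingHom := by
  refine ringHom_ext (fun p => ?_) fun i => ?_
  · simpa [eliminateX, dilMap] using AlgHom.congr_fun (divTPow_comp_mulTPow A d) p
  · simp [eliminateX, dilMap, divTPow]

lemma quotientMk_varsOfX_comp_eliminateX :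
    (Ideal.Quotient.mk (Ideal.span (Set.range fun i =>
        C (X (some i)) - C (X none ^ d i) * X i))).comp
      ((varsOfX A).toRingHom.comp (eliminateX A d)) = Ideal.Quotient.mk _ := by
  set J : Ideal (MvPolynomial σ (MvPolynomial (Option σ) A)) := Ideal.span _
  have hC : (Ideal.Quotient.mk J).comp ((varsOfX A).toRingHom.comp (mulTPow A d).toRingHom)
      = (Ideal.Quotient.mk J).comp C := by
    refine ringHom_ext (fun c => by simp [varsOfX]) fun o => ?_
    cases o with
    | none => simp [varsOfX]
    | some i =>
      simp only [RingHom.comp_apply, AlgHom.toRingHom_eq_coe, RingHom.coe_coe, mulTPow_X_some]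
      rw [eq_comm, Ideal.Quotient.eq]
      exact Ideal.subset_span ⟨i, by simp [varsOfX]⟩
  refine ringHom_ext (fun p => by simpa [eliminateX] using RingHom.congr_fun hC p)
    fun i => by simp [eliminateX, varsOfX]

lemma ker_dilMap :
    RingHom.ker (dilMap A d) = Ideal.span (Set.range fun i =>
      C (X (some i)) - C (X none ^ d i) * (X i : MvPolynomial σ (MvPolynomial (Option σ) A))) := by
  change RingHom.ker (dilMap A d).toRingHom = _
  rw [← divTPow_comp_eliminateX,
    RingHom.ker_comp_of_injective _ (divTPow_injective A d)]
  refine RingHom.ker_eq_of_leftInverse_mod _ _ _ ?_ (quotientMk_varsOfX_comp_eliminateX A d)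
  rw [Ideal.span_le]
  rintro _ ⟨i, rfl⟩
  simp [eliminateX]

lemma range_dilMap :
    (dilMap A d).range = dilatation (fun i => Ideal.span {X (some i)}) (tPow A d) := by
  rw [dilatation_span_singleton, dilMap, Algebra.adjoin_range_eq_range_aeval]

end Polynomial

/-- in `P = A[T, X_1, …, X_n]` (with `T = X none`, `X_i = X (some i)`),
`P[x_1,…,x_n]/(X_i − T^{d_i}x_i) ≅ P[(X_1)/T^{d_1}, …, (X_n)/T^{d_n}]` canonically as
`P`-algebras. -/
theorem stmt18 (n : ℕ) (d : Fin n → ℕ) :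
    Nonempty ((MvPolynomial (Fin n) (MvPolynomial (Option (Fin n)) A)
        ⧸ relIdealP (A := A) n d)
      ≃ₐ[MvPolynomial (Option (Fin n)) A]
        ↥(dilatation
            (fun i : Fin n =>
              Ideal.span {(MvPolynomial.X (Option.some i) :
                MvPolynomial (Option (Fin n)) A)})
            (fun i => MvPolynomial.X Option.none ^ d i))) :=
  ⟨(Ideal.quotientEquivAlgOfEq _ (ker_dilMap A d)).symm.trans <|
    (Ideal.quotientKerEquivRange (dilMap A d)).trans <|
      Subalgebra.equivOfEq _ _ (range_dilMap A d)⟩
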